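/- Let n ≥ 1 and let H : ℝ × ℝⁿ → ℝ be a C² function such that the spatial Hessian of H is pointwise a scalar multiple of the identity: ∂²H/∂xᵢ∂xⱼ(u,x) = 2φ(u,x)·δᵢⱼ for some function φ, with n ≥ 2. Then φ depends only on u, and H(u,x) = a(u)·Σᵢ xᵢ² + Σᵢ bᵢ(u)·xᵢ + c(u) for some functions a, bᵢ, c of u alone. -/

import Mathlib

/-- Spatial partial derivative in the `i`-th coordinate. -/
noncomputable def pd {n : ℕ} (i : Fin n) (F : (Fin n → ℝ) → ℝ) : (Fin n → ℝ) → ℝ :=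
  fun x => deriv (fun t => F (Function.update x i t)) (x i)

open Finset Function

/-! Off-diagonal Hessian entries vanish, so `∂ⱼH` depends on `xⱼ` alone, and hence so does its
`xⱼ`-derivative `2φ`. A function that depends only on `x₀` and also only on `x₁` is constant,
so `φ = a`; this needs no third derivatives, so `C²` suffices. Then `∂ⱼH - 2a xⱼ`, and afterwards
`H - a|x|² - ∑ bᵢxᵢ`, have vanishing gradient and are constant. -/

theorem apply_add_eq_of_fderiv_apply_eq_zero {E : Type*} [NormedAddCommGroup E] [NormedSpace ℝ E]
    {G : E → ℝ} (hG : Differentiable ℝ G) {v : E} (hv : ∀ z, fderiv ℝ G z v = 0) (x : E) :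
    G (x + v) = G x := by
  have hline : ∀ t : ℝ, HasDerivAt (fun s : ℝ => G (x + s • v)) 0 t := fun t => by
    have h := (hG (x + t • v)).hasFDerivAt.comp_hasDerivAt t
      (((hasDerivAt_id t).smul_const v).const_add x)
    rwa [one_smul, hv] at h
  simpa using is_const_of_deriv_eq_zero (fun t => (hline t).differentiableAt)
    (fun t => (hline t).deriv) 1 0

theorem DependsOn.inter {ι : Type*} {α : ι → Type*} {β : Type*} {f : (Π i, α i) → β}
    {s t : Set ι} (hs : DependsOn f s) (ht : DependsOn f t) : DependsOn f (s ∩ t) := by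
  classical
  intro x y hxy
  let z : Π i, α i := fun i => if i ∈ s then x i else y i
  calc f x = f z := hs fun i hi => by simp [z, hi]
    _ = f y := ht fun i hi => by
      by_cases h : i ∈ s
      · simp [z, h, hxy i ⟨h, hi⟩]
      · simp [z, h]

section PartialDerivative

variable {n : ℕ}

theorem pd_eq_fderiv {F : (Fin n → ℝ) → ℝ} {x : Fin n → ℝ} (hF : DifferentiableAt ℝ F x)
    (i : Fin n) : pd i F x = fderiv ℝ F x (Pi.single i 1) :=
  (hF.hasFDerivAt.comp_hasDerivAt_of_eq (x i) (hasDerivAt_update x i (x i))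
    (update_eq_self i x).symm).deriv

theorem pd_sub {F G : (Fin n → ℝ) → ℝ} {x : Fin n → ℝ} (hF : DifferentiableAt ℝ F x)
    (hG : DifferentiableAt ℝ G x) (i : Fin n) : pd i (F - G) x = pd i F x - pd i G x := by
  rw [pd_eq_fderiv (hF.sub hG), pd_eq_fderiv hF, pd_eq_fderiv hG, fderiv_sub hF hG]
  rfl

theorem pd_sum_apply (f : Fin n → ℝ → ℝ) (x : Fin n → ℝ) (i : Fin n) :
    pd i (fun y => ∑ k, f k (y k)) x = deriv (f i) (x i) := by
  have h : (fun t => ∑ k, f k (update x i t k)) =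
      fun t => f i t + ∑ k ∈ univ \ {i}, f k (x k) := by
    funext t
    simp only [apply_update f x i t]
    exact sum_update_of_mem (mem_univ i) _ _
  simp only [pd, h, deriv_add_const]

theorem fderiv_apply_eq_zero_of_pd_eq_zero {G : (Fin n → ℝ) → ℝ} {z v : Fin n → ℝ}
    (hG : DifferentiableAt ℝ G z) (hv : ∀ i, v i ≠ 0 → pd i G z = 0) : fderiv ℝ G z v = 0 := by
  rw [← univ_sum_single v, map_sum]
  refine sum_eq_zero fun i _ => ?_
  by_cases hi : v i = 0
  · simp [hi]
  · rw [← mul_one (v i), ← smul_eq_mul, Pi.single_smul', map_smul, ← pd_eq_fderiv hG, hv i hi,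
      smul_zero]

theorem dependsOn_of_pd_eq_zero {G : (Fin n → ℝ) → ℝ} (hG : Differentiable ℝ G)
    {s : Set (Fin n)} (h : ∀ z, ∀ i ∉ s, pd i G z = 0) : DependsOn G s := by
  intro x y hxy
  have hv : ∀ z, fderiv ℝ G z (y - x) = 0 := fun z =>
    fderiv_apply_eq_zero_of_pd_eq_zero (hG z) fun i hi =>
      h z i fun his => hi (by simp [hxy i his])
  simpa using (apply_add_eq_of_fderiv_apply_eq_zero hG hv x).symm

theorem sub_eq_sub_of_pd_eq {G Q : (Fin n → ℝ) → ℝ} (hG : Differentiable ℝ G)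
    (hQ : Differentiable ℝ Q) (h : ∀ z i, pd i G z = pd i Q z) (x y : Fin n → ℝ) :
    G x - Q x = G y - Q y :=
  (dependsOn_of_pd_eq_zero (hG.sub hQ) fun z i _ => by
    rw [pd_sub (hG z) (hQ z), h, sub_self]).empty x y

theorem DependsOn.pd {G : (Fin n → ℝ) → ℝ} {j : Fin n} (hG : DependsOn G {j}) :
    DependsOn (pd j G) {j} := by
  intro x y hxy
  have hj : x j = y j := hxy j rfl
  have hline : (fun t => G (Function.update x j t)) = fun t => G (Function.update y j t) :=
    funext fun t => hG fun i hi => by simp [Set.mem_singleton_iff.mp hi]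
  simp only [_root_.pd, hline, hj]

theorem ContDiff.pd {m : WithTop ℕ∞} {F : (Fin n → ℝ) → ℝ} (hF : ContDiff ℝ (m + 1) F)
    (j : Fin n) : ContDiff ℝ m (pd j F) := by
  have hd : Differentiable ℝ F := hF.differentiable (by simp)
  rw [show _root_.pd j F = fun x => fderiv ℝ F x (Pi.single j 1) from
    funext fun x => pd_eq_fderiv (hd x) j]
  exact (hF.fderiv_right le_rfl).clm_apply contDiff_const

end PartialDerivative

section ConformalHessian

variable {n : ℕ} {F φ : (Fin n → ℝ) → ℝ}

theorem dependsOn_pd_of_hessian_eq_smul (hF : ContDiff ℝ 2 F)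
    (hHess : ∀ x i j, pd i (pd j F) x = 2 * φ x * (if i = j then 1 else 0)) (j : Fin n) :
    DependsOn (pd j F) {j} :=
  dependsOn_of_pd_eq_zero ((hF.pd j).differentiable one_ne_zero) fun z i hi => by
    simp [hHess, Set.mem_singleton_iff.not.mp hi]

theorem dependsOn_of_hessian_eq_smul (hF : ContDiff ℝ 2 F)
    (hHess : ∀ x i j, pd i (pd j F) x = 2 * φ x * (if i = j then 1 else 0)) (j : Fin n) :
    DependsOn φ {j} := by
  intro x y hxy
  have h := (dependsOn_pd_of_hessian_eq_smul hF hHess j).pd hxy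
  simpa [hHess] using h

theorem apply_eq_apply_of_hessian_eq_smul (hn : 2 ≤ n) (hF : ContDiff ℝ 2 F)
    (hHess : ∀ x i j, pd i (pd j F) x = 2 * φ x * (if i = j then 1 else 0)) (x y : Fin n → ℝ) :
    φ x = φ y := by
  let i : Fin n := ⟨0, by omega⟩
  let j : Fin n := ⟨1, by omega⟩
  have hij : ({i} ∩ {j} : Set (Fin n)) = ∅ := by simp [i, j, Fin.ext_iff]
  have h := (dependsOn_of_hessian_eq_smul hF hHess i).inter
    (dependsOn_of_hessian_eq_smul hF hHess j)
  rw [hij] at h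
  exact h.empty x y

theorem pd_eq_of_hessian_eq_smul (hn : 2 ≤ n) (hF : ContDiff ℝ 2 F)
    (hHess : ∀ x i j, pd i (pd j F) x = 2 * φ x * (if i = j then 1 else 0)) (j : Fin n)
    (x : Fin n → ℝ) : pd j F x = 2 * φ 0 * x j + pd j F 0 := by
  let c : Fin n → ℝ := fun i => 2 * φ 0 * (if i = j then 1 else 0)
  have h := sub_eq_sub_of_pd_eq (Q := fun y => ∑ k, c k * y k)
    ((hF.pd j).differentiable one_ne_zero) (by fun_prop) (fun z i => by
      rw [pd_sum_apply, hHess, apply_eq_apply_of_hessian_eq_smul hn hF hHess z 0]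
      simp [c]) x 0
  rw [← sub_eq_iff_eq_add']
  simpa [c] using h

theorem eq_quadratic_of_hessian_eq_smul (hn : 2 ≤ n) (hF : ContDiff ℝ 2 F)
    (hHess : ∀ x i j, pd i (pd j F) x = 2 * φ x * (if i = j then 1 else 0)) (x : Fin n → ℝ) :
    F x = φ 0 * ∑ i, x i ^ 2 + ∑ i, pd i F 0 * x i + F 0 := by
  have h := sub_eq_sub_of_pd_eq (Q := fun y => ∑ k, (φ 0 * y k ^ 2 + pd k F 0 * y k))
    (hF.differentiable two_ne_zero) (by fun_prop) (fun z i => by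
      rw [pd_sum_apply (fun k t => φ 0 * t ^ 2 + pd k F 0 * t),
        pd_eq_of_hessian_eq_smul hn hF hHess]
      have hd := ((hasDerivAt_pow 2 (z i)).const_mul (φ 0)).fun_add
        ((hasDerivAt_id' (z i)).const_mul (pd i F 0))
      rw [hd.deriv]
      push_cast
      ring) x 0
  rw [sum_add_distrib, ← mul_sum] at h
  rw [← sub_eq_iff_eq_add']
  simpa using h

end ConformalHessian

open Finset in
theorem stmt_9 (n : ℕ) (hn : 2 ≤ n) (H : ℝ → (Fin n → ℝ) → ℝ)
    (hC2 : ContDiff ℝ 2 (fun p : ℝ × (Fin n → ℝ) => H p.1 p.2))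
    (φ : ℝ → (Fin n → ℝ) → ℝ)
    (hHess : ∀ (u : ℝ) (x : Fin n → ℝ) (i j : Fin n),
      pd i (pd j (H u)) x = 2 * φ u x * (if i = j then 1 else 0)) :
    (∀ (u : ℝ) (x y : Fin n → ℝ), φ u x = φ u y) ∧
    ∃ (a c : ℝ → ℝ) (b : Fin n → ℝ → ℝ), ∀ (u : ℝ) (x : Fin n → ℝ),
      φ u x = a u ∧ H u x = a u * ∑ i, (x i) ^ 2 + ∑ i, b i u * x i + c u := by
  have hF : ∀ u, ContDiff ℝ 2 (H u) := fun u => hC2.comp (contDiff_const.prodMk contDiff_id)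
  have hφ : ∀ u x y, φ u x = φ u y := fun u =>
    apply_eq_apply_of_hessian_eq_smul hn (hF u) (hHess u)
  exact ⟨hφ, fun u => φ u 0, fun u => H u 0, fun i u => pd i (H u) 0, fun u x =>
    ⟨hφ u x 0, eq_quadratic_of_hessian_eq_smul hn (hF u) (hHess u) x⟩⟩
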